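/- arXiv:2112.00070 — 9 statements merged into one kernel-verified Lean document; each statement's English description precedes it below -/
import Mathlib

section
/- For integers s ≥ 2 and nonnegative integers t1, t2, k with t1 ≤ k-3, t2 ≤ k-3, and k-1 ≤ t1 + t2 ≤ 2(k-3), the binomial coefficients satisfy C(t1+1, s) + C(t2+1, s) ≤ C(k-1, s) + C(t1+t2-k+3, s). -/
/-!
The increments `n ↦ C(n + 1, r) - C(n, r) = C(n, r - 1)` are monotone, so `n ↦ C(n, r)` is convex
and a pair of arguments can only gain by being spread apart. Here `t1 + 1` and `t2 + 1` are at
most the larger of `k - 1` and `t1 + t2 + 3 - k`, whose sum is at least theirs.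
-/

namespace Nat

theorem choose_add_choose_add_le {a d : ℕ} (h : d ≤ a) (n r : ℕ) :
    a.choose r + (d + n).choose r ≤ (a + n).choose r + d.choose r := by
  induction n with
  | zero => simp
  | succ n ih =>
    cases r with
    | zero => simp
    | succ r =>
      have hle : (d + n).choose r ≤ (a + n).choose r := choose_le_choose r (by omega)
      rw [← Nat.add_assoc, ← Nat.add_assoc, choose_succ_succ', choose_succ_succ']
      omega

theorem choose_add_choose_le_of_le_max {x y p q : ℕ} (hx : x ≤ max p q) (hy : y ≤ max p q)
    (hsum : x + y ≤ p + q) (r : ℕ) :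
    x.choose r + y.choose r ≤ p.choose r + q.choose r := by
  wlog hqp : q ≤ p generalizing p q
  · rw [Nat.add_comm (p.choose r)]
    exact this (max_comm p q ▸ hx) (max_comm p q ▸ hy) (by omega) (by omega)
  rw [max_eq_left hqp] at hx hy
  rcases le_or_gt x q with hxq | hqx
  · rw [Nat.add_comm (p.choose r)]
    exact Nat.add_le_add (choose_le_choose r hxq) (choose_le_choose r hy)
  rcases le_or_gt y q with hyq | hqy
  · exact Nat.add_le_add (choose_le_choose r hx) (choose_le_choose r hyq)
  calc x.choose r + y.choose r = x.choose r + (q + (y - q)).choose r := by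
        rw [Nat.add_sub_cancel' hqy.le]
    _ ≤ (x + (y - q)).choose r + q.choose r := choose_add_choose_add_le hqx.le _ r
    _ ≤ p.choose r + q.choose r := Nat.add_le_add_right (choose_le_choose r (by omega)) _

end Nat

theorem stmt_1_general (s t1 t2 k : ℕ)
    (h1 : t1 ≤ k - 3) (h2 : t2 ≤ k - 3) :
    Nat.choose (t1 + 1) s + Nat.choose (t2 + 1) s ≤
      Nat.choose (k - 1) s + Nat.choose (t1 + t2 + 3 - k) s :=
  Nat.choose_add_choose_le_of_le_max (by omega) (by omega) (by omega) s

theorem stmt_1 (s t1 t2 k : ℕ) (hs : 2 ≤ s)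
    (h1 : t1 ≤ k - 3) (h2 : t2 ≤ k - 3)
    (hlo : k - 1 ≤ t1 + t2) (hhi : t1 + t2 ≤ 2 * (k - 3)) :
    Nat.choose (t1 + 1) s + Nat.choose (t2 + 1) s ≤
      Nat.choose (k - 1) s + Nat.choose (t1 + t2 + 3 - k) s :=
  stmt_1_general s t1 t2 k h1 h2
end

section
/- For integers s ≥ 3 and nonnegative integers t1, t2, k ≥ 5 with t1 ≤ k-4, t2 ≤ k-4, and k-3 ≤ t1 + t2 ≤ 2(k-4), the binomial coefficients satisfy C(t1+2, s) + C(t2+2, s) ≤ C(k-1, s) + C(t1+t2-k+5, s). -/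
/-!
The increments `(n + 1).choose s - n.choose s = n.choose (s - 1)` are monotone in `n`, so
`n ↦ n.choose s` is discretely convex: spreading two arguments apart while keeping their sum
fixed can only increase `x.choose s + y.choose s`. The pair `(t1 + 2, t2 + 2)` is spread into
`(t1 + t2 + 5 - k, k - 1)`.
-/

namespace Nat

theorem choose_succ_add_choose_le {x y : ℕ} (s : ℕ) (h : x ≤ y) :
    (x + 1).choose s + y.choose s ≤ x.choose s + (y + 1).choose s := by
  cases s with
  | zero => simp
  | succ s =>
    rw [choose_succ_succ', choose_succ_succ' y]
    have := choose_le_choose s h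
    omega

theorem choose_add_add_choose_le {x y : ℕ} (s d : ℕ) (h : x ≤ y) :
    (x + d).choose s + y.choose s ≤ x.choose s + (y + d).choose s := by
  induction d generalizing x y with
  | zero => rfl
  | succ d ih =>
    have hstep := choose_succ_add_choose_le s h
    have hshift := ih (x := x + 1) (y := y + 1) (by omega)
    rw [show x + 1 + d = x + (d + 1) by omega, show y + 1 + d = y + (d + 1) by omega] at hshift
    omega

theorem choose_add_choose_le_of_add_eq {x y x' y' : ℕ} (s : ℕ) (hx : x' ≤ x) (hy : x' ≤ y)
    (hsum : x + y = x' + y') :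
    x.choose s + y.choose s ≤ x'.choose s + y'.choose s := by
  wlog hxy : x ≤ y generalizing x y
  · rw [add_comm (x.choose s)]
    exact this hy hx (by omega) (by omega)
  obtain ⟨d, rfl⟩ := Nat.exists_eq_add_of_le hx
  obtain rfl : y' = y + d := by omega
  exact choose_add_add_choose_le s d (by omega)

end Nat

theorem stmt_3_general (s t1 t2 k : ℕ) (hk : 5 ≤ k)
    (h1 : t1 ≤ k - 4) (h2 : t2 ≤ k - 4)
    (hlo : k - 3 ≤ t1 + t2) :
    Nat.choose (t1 + 2) s + Nat.choose (t2 + 2) s ≤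
      Nat.choose (k - 1) s + Nat.choose (t1 + t2 + 5 - k) s := by
  rw [add_comm (Nat.choose (k - 1) s)]
  exact Nat.choose_add_choose_le_of_add_eq s (by omega) (by omega) (by omega)

theorem stmt_3 (s t1 t2 k : ℕ) (hs : 3 ≤ s) (hk : 5 ≤ k)
    (h1 : t1 ≤ k - 4) (h2 : t2 ≤ k - 4)
    (hlo : k - 3 ≤ t1 + t2) (hhi : t1 + t2 ≤ 2 * (k - 4)) :
    Nat.choose (t1 + 2) s + Nat.choose (t2 + 2) s ≤
      Nat.choose (k - 1) s + Nat.choose (t1 + t2 + 5 - k) s :=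
  stmt_3_general s t1 t2 k hk h1 h2 hlo
end

section
/- Let n ≥ k ≥ 5 and s ≥ 2 be integers. Define f_s(n,k,a) = C(k-a, s) + (n-k+a)·C(a, s-1), and define ψ_s(n,k) = r·C(k-1, s) + C(t+1, s) where n-1 = r(k-2) + t with 0 ≤ t ≤ k-3. Then max{f_s(n,k,2), f_s(n,k,⌊(k-1)/2⌋)} ≤ ψ_s(n,k). -/
/-!
Write `r = R + 1`, so that `n + a - k = R (k - 2) + (t + a - 1)`. Since `2a < k` for both
`a = 2` and `a = ⌊(k-1)/2⌋`, each of the `R` full blocks is absorbed by one copy of `C(k-1, s)`,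
as `(k - 2) C(a, s-1) ≤ C(k-1, s)` (for `s ≥ 3`, two terms of Vandermonde's identity for
`a + (k - 1 - a)`).
The remaining block `C(k-a, s) + (t + a - 1) C(a, s-1)` is bounded by `C(k-1, s) + C(t+1, s)`:
expand `C((k - a) + (a - 1), s)` by Vandermonde up to its third term, and control the excess
`t C(a, s-1)` by `C(a, 2) C(a, s-2) + C(t+1, s)`, using `C(t+1, s) ≥ (t + 1 - a) C(a, s-1)`.
-/

open Finset Nat

lemma choose_two_mul_two (n : ℕ) : n.choose 2 * 2 = n * (n - 1) := by
  simpa using choose_succ_right_eq n 1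

lemma sum_choose_mul_choose_le_add_choose {m n k : ℕ} {S : Finset (ℕ × ℕ)}
    (hS : S ⊆ antidiagonal k) :
    ∑ ij ∈ S, m.choose ij.1 * n.choose ij.2 ≤ (m + n).choose k :=
  add_choose_eq m n k ▸ sum_le_sum_of_subset hS

lemma choose_add_mul_choose_le_add_choose (m d u : ℕ) :
    m.choose (u + 1) + d * m.choose u ≤ (m + d).choose (u + 1) := by
  have h := sum_choose_mul_choose_le_add_choose (m := m) (n := d) (k := u + 1)
    (S := {(u + 1, 0), (u, 1)}) (by simp [insert_subset_iff])
  rwa [sum_pair (by simp), choose_zero_right, choose_one_right, mul_one, mul_comm] at h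

lemma choose_add_mul_choose_add_choose_two_mul_le_add_choose (m d u : ℕ) :
    m.choose (u + 2) + d * m.choose (u + 1) + d.choose 2 * m.choose u ≤
      (m + d).choose (u + 2) := by
  have h := sum_choose_mul_choose_le_add_choose (m := m) (n := d) (k := u + 2)
    (S := {(u + 2, 0), (u + 1, 1), (u, 2)}) (by simp [insert_subset_iff])
  rw [sum_insert (by simp), sum_pair (by simp)] at h
  simpa [mul_comm, add_assoc] using h

lemma pred_mul_choose_le_choose {a m : ℕ} (u : ℕ) (h : 2 * a ≤ m) :
    (m - 1) * a.choose (u + 1) ≤ m.choose (u + 2) := by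
  rcases u.eq_zero_or_pos with rfl | hu
  · refine Nat.le_of_mul_le_mul_right ?_ two_pos
    calc (m - 1) * a.choose 1 * 2 = (m - 1) * (2 * a) := by rw [choose_one_right]; ring
      _ ≤ (m - 1) * m := by gcongr
      _ = m.choose 2 * 2 := by rw [choose_two_mul_two]; ring
  · obtain ⟨d, rfl⟩ := Nat.exists_eq_add_of_le (show a ≤ m by omega)
    have h := sum_choose_mul_choose_le_add_choose (m := a) (n := d) (k := u + 2)
      (S := {(u + 1, 1), (1, u + 1)}) (by simp [insert_subset_iff]; omega)
    rw [sum_pair (by simp; omega), choose_one_right, choose_one_right] at h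
    calc (a + d - 1) * a.choose (u + 1) ≤ (a + d) * a.choose (u + 1) := by gcongr; omega
      _ = a.choose (u + 1) * d + a * a.choose (u + 1) := by ring
      _ ≤ a.choose (u + 1) * d + a * d.choose (u + 1) := by gcongr; omega
      _ ≤ (a + d).choose (u + 2) := h

lemma mul_choose_le_mul_choose_add_choose (b t u : ℕ) :
    t * b.choose u ≤ b * b.choose u + (t + 1).choose (u + 1) := by
  rcases le_or_gt b (t + 1) with h | h
  · obtain ⟨d, hd⟩ := Nat.exists_eq_add_of_le h
    have := choose_add_mul_choose_le_add_choose b d u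
    rw [← hd] at this
    calc t * b.choose u ≤ (b + d) * b.choose u := by gcongr; omega
      _ ≤ b * b.choose u + (t + 1).choose (u + 1) := by rw [add_mul]; omega
  · calc t * b.choose u ≤ b * b.choose u := by gcongr; omega
      _ ≤ _ := le_self_add

lemma mul_choose_succ_le_choose_two_mul_choose (b : ℕ) {u : ℕ} (hu : 1 ≤ u) :
    b * b.choose (u + 1) ≤ b.choose 2 * b.choose u := by
  refine Nat.le_of_mul_le_mul_right ?_ (show 0 < 2 * (u + 1) by omega)
  have hb : 2 * (b - u) ≤ (u + 1) * (b - 1) :=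
    calc 2 * (b - u) ≤ 2 * (b - 1) := by gcongr
      _ ≤ (u + 1) * (b - 1) := by gcongr; omega
  calc b * b.choose (u + 1) * (2 * (u + 1)) = 2 * b * (b.choose (u + 1) * (u + 1)) := by ring
    _ = 2 * (b - u) * b * b.choose u := by rw [choose_succ_right_eq]; ring
    _ ≤ (u + 1) * (b - 1) * b * b.choose u := by gcongr
    _ = (u + 1) * (b.choose 2 * 2) * b.choose u := by rw [choose_two_mul_two]; ring
    _ = b.choose 2 * b.choose u * (2 * (u + 1)) := by ring

-- `2 t b ≤ b (b - 1) + (t + 1) t` is `(b - t) (b - t - 1) ≥ 0`.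
lemma mul_le_choose_two_add_choose_two (b t : ℕ) : t * b ≤ b.choose 2 + (t + 1).choose 2 := by
  refine Nat.le_of_mul_le_mul_right ?_ two_pos
  rw [add_mul, choose_two_mul_two, choose_two_mul_two, Nat.add_sub_cancel]
  rcases b with _ | c
  · simp
  · rw [Nat.add_sub_cancel]
    rcases le_or_gt t c with h | h <;> nlinarith

lemma mul_choose_le_choose_two_mul_choose_add_choose (b t u : ℕ) :
    t * b.choose (u + 1) ≤ b.choose 2 * b.choose u + (t + 1).choose (u + 2) := by
  rcases u.eq_zero_or_pos with rfl | hu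
  · simpa using mul_le_choose_two_add_choose_two b t
  · calc t * b.choose (u + 1) ≤ b * b.choose (u + 1) + (t + 1).choose (u + 2) :=
          mul_choose_le_mul_choose_add_choose b t (u + 1)
      _ ≤ b.choose 2 * b.choose u + (t + 1).choose (u + 2) := by
          gcongr ?_ + _; exact mul_choose_succ_le_choose_two_mul_choose b hu

lemma choose_add_mul_choose_le_add_choose_add_choose {c d : ℕ} (t u : ℕ) (h : c + 2 ≤ d) :
    d.choose (u + 2) + (t + c) * (c + 1).choose (u + 1) ≤
      (d + c).choose (u + 2) + (t + 1).choose (u + 2) := by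
  have hG := mul_choose_le_choose_two_mul_choose_add_choose (c + 1) t u
  have hV := choose_add_mul_choose_add_choose_two_mul_le_add_choose d c u
  have hc : (c + 1).choose 2 = c + c.choose 2 := by
    rw [choose_succ_succ, choose_one_right]
  calc d.choose (u + 2) + (t + c) * (c + 1).choose (u + 1)
      = d.choose (u + 2) + t * (c + 1).choose (u + 1) + c * (c + 1).choose (u + 1) := by ring
    _ ≤ d.choose (u + 2) + ((c + 1).choose 2 * (c + 1).choose u + (t + 1).choose (u + 2)) +
          c * (c + 1).choose (u + 1) := by gcongr
    _ = d.choose (u + 2) + c * (c + 2).choose (u + 1) + c.choose 2 * (c + 1).choose u +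
          (t + 1).choose (u + 2) := by rw [hc, choose_succ_succ (c + 1) u]; ring
    _ ≤ d.choose (u + 2) + c * d.choose (u + 1) + c.choose 2 * d.choose u +
          (t + 1).choose (u + 2) := by gcongr; omega
    _ ≤ (d + c).choose (u + 2) + (t + 1).choose (u + 2) := by gcongr

lemma choose_sub_add_mul_choose_le {n k s r t a : ℕ} (hs : 2 ≤ s) (ha : 1 ≤ a) (hak : 2 * a < k)
    (hr : 1 ≤ r) (hrt : n - 1 = r * (k - 2) + t) :
    (k - a).choose s + (n + a - k) * a.choose (s - 1) ≤
      r * (k - 1).choose s + (t + 1).choose s := by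
  obtain ⟨u, rfl⟩ : ∃ u, s = u + 2 := ⟨s - 2, by omega⟩
  rw [show u + 2 - 1 = u + 1 from rfl]
  obtain ⟨R, rfl⟩ : ∃ R, r = R + 1 := ⟨r - 1, by omega⟩
  obtain ⟨c, rfl⟩ : ∃ c, a = c + 1 := ⟨a - 1, by omega⟩
  have hA : (k - 2) * (c + 1).choose (u + 1) ≤ (k - 1).choose (u + 2) := by
    simpa [Nat.sub_sub] using pred_mul_choose_le_choose (m := k - 1) u (by omega)
  have hB := choose_add_mul_choose_le_add_choose_add_choose (c := c) (d := k - (c + 1)) t u (by omega)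
  rw [show k - (c + 1) + c = k - 1 by omega] at hB
  have hlen : n + (c + 1) - k = R * (k - 2) + (t + c) := by
    rw [add_one_mul] at hrt; omega
  calc (k - (c + 1)).choose (u + 2) + (n + (c + 1) - k) * (c + 1).choose (u + 1)
      = R * ((k - 2) * (c + 1).choose (u + 1)) +
          ((k - (c + 1)).choose (u + 2) + (t + c) * (c + 1).choose (u + 1)) := by
        rw [hlen]; ring
    _ ≤ R * (k - 1).choose (u + 2) + ((k - 1).choose (u + 2) + (t + 1).choose (u + 2)) := by
        gcongr
    _ = (R + 1) * (k - 1).choose (u + 2) + (t + 1).choose (u + 2) := by ring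

theorem stmt_5 (n k s r t : ℕ) (hk : 5 ≤ k) (hn : k ≤ n) (hs : 2 ≤ s)
    (ht : t ≤ k - 3) (hrt : n - 1 = r * (k - 2) + t) :
    max (Nat.choose (k - 2) s + (n + 2 - k) * Nat.choose 2 (s - 1))
        (Nat.choose (k - (k - 1) / 2) s + (n + (k - 1) / 2 - k) * Nat.choose ((k - 1) / 2) (s - 1))
      ≤ r * Nat.choose (k - 1) s + Nat.choose (t + 1) s := by
  have hr : 1 ≤ r := Nat.pos_of_ne_zero (by rintro rfl; omega)
  exact max_le (choose_sub_add_mul_choose_le hs (by omega) (by omega) hr hrt)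
    (choose_sub_add_mul_choose_le hs (by omega) (by omega) hr hrt)
end

section
/- Let G be a 2-connected graph and uv an edge of G such that u and v have no common neighbor. If the graph G/uv obtained by contracting the edge uv is not 2-connected, then {u, v} is a vertex cut of G. -/
/-- A graph is 2-connected if it has at least 3 vertices and remains connected
after deleting any single vertex. -/
def TwoConnected {V : Type*} (G : SimpleGraph V) : Prop :=
  3 ≤ Nat.card V ∧ ∀ v : V, (G.induce {w : V | w ≠ v}).Connected

/-- `{u, v}` is a vertex cut of `G`: `G - {u,v}` is disconnected. -/
def IsCutPair {V : Type*} (G : SimpleGraph V) (u v : V) : Prop :=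
  ¬ (G.induce {w : V | w ≠ u ∧ w ≠ v}).Connected

/-- The simple graph obtained from `G` by contracting the edge `uv`
(identifying `v` with `u` and deleting `v`). -/
def contractGraph {V : Type*} (G : SimpleGraph V) (u v : V) :
    SimpleGraph {w : V // w ≠ v} :=
  SimpleGraph.fromRel fun a b =>
    G.Adj a.val b.val ∨ (a.val = u ∧ G.Adj v b.val) ∨ (b.val = u ∧ G.Adj v a.val)

/-!
Let `x` be a cut vertex of `G/uv`; it exists because `G/uv` still has at least three vertices:
`u` and `v` have neighbours `w ≠ v` and `w' ≠ u` respectively, and `w ≠ w'` since `u`, `v` have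
no common neighbour. The contraction map `V → V(G/uv)`, sending `v` to `u`, maps every edge to an
edge or to a single vertex, so it carries connected vertex sets onto connected vertex sets.
If `x` is not the contracted vertex `u`, it maps the connected graph `G - x` onto `G/uv - x`,
which is impossible. Hence `x = u`, and it maps `G - {u, v}` onto `G/uv - u`, so `G - {u, v}`
cannot be connected.
-/

namespace SimpleGraph

variable {α β : Type*} {A : SimpleGraph α} {B : SimpleGraph β}

lemma Connected.of_surjective_of_adj {f : α → β} (hf : Function.Surjective f)
    (hadj : ∀ a b, A.Adj a b → f a = f b ∨ B.Adj (f a) (f b)) (hA : A.Connected) :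
    B.Connected := by
  have hreach : ∀ a b, B.Reachable (f a) (f b) := by
    intro a b
    rw [reachable_iff_reflTransGen]
    refine Relation.ReflTransGen.lift' f (fun a b hab => ?_) a b
      ((reachable_iff_reflTransGen a b).1 (hA.preconnected a b))
    rw [Function.onFun]
    rcases hadj a b hab with h | h
    · exact h ▸ Relation.ReflTransGen.refl
    · exact Relation.ReflTransGen.single h
  obtain ⟨a⟩ := hA.nonempty
  have : Nonempty β := ⟨f a⟩
  exact ⟨hf.forall₂.2 hreach⟩

lemma Connected.induce_of_surjOn {f : α → β} {s : Set α} {t : Set β}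
    (hmaps : Set.MapsTo f s t) (hsurj : Set.SurjOn f s t)
    (hadj : ∀ a b, A.Adj a b → f a = f b ∨ B.Adj (f a) (f b)) (hs : (A.induce s).Connected) :
    (B.induce t).Connected :=
  hs.of_surjective_of_adj (hmaps.restrict_surjective_iff.2 hsurj)
    fun a b hab => (hadj a b hab).imp Subtype.ext id

end SimpleGraph

lemma three_le_natCard_of_ne {α : Type*} [Finite α] {a b c : α}
    (hab : a ≠ b) (hac : a ≠ c) (hbc : b ≠ c) : 3 ≤ Nat.card α := by
  let := Fintype.ofFinite α
  rw [Nat.card_eq_fintype_card]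
  exact Fintype.two_lt_card_iff.2 ⟨a, b, c, hab, hac, hbc⟩

namespace TwoConnected

variable {V : Type*} {G : SimpleGraph V}

lemma finite (h : TwoConnected G) : Finite V :=
  Nat.finite_of_card_ne_zero (by have := h.1; omega)

lemma exists_ne_ne (h : TwoConnected G) (u v : V) : ∃ x, x ≠ u ∧ x ≠ v := by
  have := h.finite
  let := Fintype.ofFinite V
  have hcard := h.1
  rw [Nat.card_eq_fintype_card] at hcard
  obtain ⟨a, b, c, hab, hac, hbc⟩ := Fintype.two_lt_card_iff.1 hcard
  by_contra! hx
  have hx : ∀ x, x = u ∨ x = v := fun x => or_iff_not_imp_left.2 (hx x)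
  rcases hx a with rfl | rfl <;> rcases hx b with rfl | rfl <;> rcases hx c with rfl | rfl <;>
    contradiction

lemma exists_adj_ne (h : TwoConnected G) {u v : V} (huv : u ≠ v) : ∃ w, w ≠ v ∧ G.Adj u w := by
  obtain ⟨x, hxu, hxv⟩ := h.exists_ne_ne u v
  have : Nontrivial {w : V | w ≠ v} :=
    ⟨⟨⟨u, huv⟩, ⟨x, hxv⟩, fun hux => hxu (congrArg Subtype.val hux).symm⟩⟩
  obtain ⟨⟨w, hwv⟩, huw⟩ := (h.2 v).preconnected.exists_adj_of_nontrivial ⟨u, huv⟩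
  exact ⟨w, hwv, huw⟩

end TwoConnected

section Contraction

variable {V : Type*} (G : SimpleGraph V) {u v : V}

open Classical in
noncomputable def contractMap (huv : u ≠ v) (w : V) : {w : V // w ≠ v} :=
  if h : w = v then ⟨u, huv⟩ else ⟨w, h⟩

lemma contractMap_of_ne (huv : u ≠ v) {w : V} (hw : w ≠ v) : contractMap huv w = ⟨w, hw⟩ :=
  dif_neg hw

lemma contractMap_self (huv : u ≠ v) : contractMap huv v = ⟨u, huv⟩ :=
  dif_pos rfl

lemma contractMap_adj_of_ne (huv : u ≠ v) {a b : V} (hab : G.Adj a b) (hbv : b ≠ v) :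
    contractMap huv a = contractMap huv b ∨
      (contractGraph G u v).Adj (contractMap huv a) (contractMap huv b) := by
  rw [contractMap_of_ne huv hbv, contractGraph, SimpleGraph.fromRel_adj]
  by_cases hav : a = v
  · subst hav
    rw [contractMap_self]
    by_cases hbu : b = u
    · exact Or.inl (Subtype.ext hbu.symm)
    · exact Or.inr ⟨fun h => hbu (congrArg Subtype.val h).symm,
        Or.inl (Or.inr (Or.inl ⟨rfl, hab⟩))⟩
  · rw [contractMap_of_ne huv hav]
    exact Or.inr ⟨fun h => hab.ne (congrArg Subtype.val h), Or.inl (Or.inl hab)⟩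

lemma contractMap_adj (huv : u ≠ v) {a b : V} (hab : G.Adj a b) :
    contractMap huv a = contractMap huv b ∨
      (contractGraph G u v).Adj (contractMap huv a) (contractMap huv b) := by
  by_cases hbv : b = v
  · have hav : a ≠ v := fun hav => hab.ne (hav.trans hbv.symm)
    rw [eq_comm, SimpleGraph.adj_comm]
    exact contractMap_adj_of_ne G huv hab.symm hav
  · exact contractMap_adj_of_ne G huv hab hbv

lemma connected_induce_contractGraph_of_val_eq (huv : u ≠ v) (x : {w : V // w ≠ v})
    (hxu : x.val = u) (h : (G.induce {w | w ≠ u ∧ w ≠ v}).Connected) :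
    ((contractGraph G u v).induce {y | y ≠ x}).Connected := by
  refine h.induce_of_surjOn (f := contractMap huv) ?_ ?_ (fun _ _ => contractMap_adj G huv)
  · rintro w ⟨hwu, hwv⟩
    simp only [Set.mem_ofPred_eq, contractMap_of_ne huv hwv]
    exact fun hwx => hwu ((congrArg Subtype.val hwx).trans hxu)
  · rintro ⟨y, hyv⟩ hyx
    refine ⟨y, ⟨fun hyu => hyx (Subtype.ext (hyu.trans hxu.symm)), hyv⟩, ?_⟩
    exact contractMap_of_ne huv hyv

lemma connected_induce_contractGraph_of_val_ne (huv : u ≠ v) (x : {w : V // w ≠ v})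
    (hxu : x.val ≠ u) (h : (G.induce {w | w ≠ x.val}).Connected) :
    ((contractGraph G u v).induce {y | y ≠ x}).Connected := by
  refine h.induce_of_surjOn (f := contractMap huv) ?_ ?_ (fun _ _ => contractMap_adj G huv)
  · intro w hwx
    by_cases hwv : w = v
    · simp only [Set.mem_ofPred_eq, hwv, contractMap_self]
      exact fun hux => hxu (congrArg Subtype.val hux).symm
    · simp only [Set.mem_ofPred_eq, contractMap_of_ne huv hwv]
      exact fun hwx' => hwx (congrArg Subtype.val hwx')
  · rintro ⟨y, hyv⟩ hyx
    exact ⟨y, fun hyx' => hyx (Subtype.ext hyx'), contractMap_of_ne huv hyv⟩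

end Contraction

theorem stmt_6 {V : Type*} (G : SimpleGraph V) (u v : V)
    (h2c : TwoConnected G) (huv : G.Adj u v)
    (hcn : ∀ w : V, ¬ (G.Adj u w ∧ G.Adj v w))
    (hnot : ¬ TwoConnected (contractGraph G u v)) :
    IsCutPair G u v := by
  have := h2c.finite
  obtain ⟨w, hwv, huw⟩ := h2c.exists_adj_ne huv.ne
  obtain ⟨w', hw'u, hvw'⟩ := h2c.exists_adj_ne huv.ne.symm
  have hww' : w ≠ w' := by
    rintro rfl
    exact hcn w ⟨huw, hvw'⟩
  have hcard : 3 ≤ Nat.card {w : V // w ≠ v} :=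
    three_le_natCard_of_ne (a := ⟨u, huv.ne⟩) (b := ⟨w, hwv⟩) (c := ⟨w', hvw'.ne'⟩)
      (fun h => huw.ne (congrArg Subtype.val h)) (fun h => hw'u (congrArg Subtype.val h).symm)
      (fun h => hww' (congrArg Subtype.val h))
  obtain ⟨x, hx⟩ := not_forall.1 fun h => hnot ⟨hcard, h⟩
  intro hconn
  by_cases hxu : x.val = u
  · exact hx (connected_induce_contractGraph_of_val_eq G huv.ne x hxu hconn)
  · exact hx (connected_induce_contractGraph_of_val_ne G huv.ne x hxu (h2c.2 x))
end

section
/- Let G be a 2-connected graph and uv an edge of G such that u and v have a common neighbor. If the edge-switching graph G[v→u] is not 2-connected, then {u, v} is a vertex cut of G. -/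
/-- The edge-switching graph `G[v → u]`: every edge `vx` with
`x ∈ N(v) \ N[u]` is replaced by the edge `ux`. -/
def switchGraph {V : Type*} (G : SimpleGraph V) (u v : V) : SimpleGraph V :=
  SimpleGraph.fromRel fun a b =>
    (G.Adj a b ∧ ¬ (a = v ∧ G.Adj v b ∧ ¬ G.Adj u b ∧ b ≠ u)
              ∧ ¬ (b = v ∧ G.Adj v a ∧ ¬ G.Adj u a ∧ a ≠ u))
    ∨ (a = u ∧ G.Adj v b ∧ ¬ G.Adj u b ∧ b ≠ u)
    ∨ (b = u ∧ G.Adj v a ∧ ¬ G.Adj u a ∧ a ≠ u)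

namespace SimpleGraph

variable {V : Type*}

theorem Connected.of_adj_reachable {G H : SimpleGraph V} (hG : G.Connected)
    (h : ∀ ⦃a b⦄, G.Adj a b → H.Reachable a b) : H.Connected := by
  have hle : G.Reachable ≤ H.Reachable := by
    rw [reachable_eq_reflTransGen, reachable_eq_reflTransGen]
    exact Relation.reflTransGen_closed fun a b hab => (reachable_iff_reflTransGen a b).1 (h hab)
  exact { preconnected := fun a b => hle a b (hG.preconnected a b), nonempty := hG.nonempty }

end SimpleGraph

namespace switchGraph

open SimpleGraph

variable {V : Type*} {G : SimpleGraph V} {u v : V}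

theorem adj_of_ne {a b : V} (ha : a ≠ v) (hb : b ≠ v) (hab : G.Adj a b) :
    (switchGraph G u v).Adj a b :=
  ⟨hab.ne, .inl (.inl ⟨hab, fun h => ha h.1, fun h => hb h.1⟩)⟩

theorem adj_self (huv : G.Adj u v) : (switchGraph G u v).Adj u v :=
  ⟨huv.ne, .inl (.inl ⟨huv, fun h => huv.ne h.1, fun h => h.2.2.2 rfl⟩)⟩

theorem adj_left_of_adj_right {b : V} (hvb : G.Adj v b) (hbu : b ≠ u) :
    (switchGraph G u v).Adj u b := by
  by_cases hub : G.Adj u b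
  · exact ⟨hub.ne, .inl (.inl ⟨hub, fun h => h.2.2.1 hub, fun h => h.2.2.2 rfl⟩)⟩
  · exact ⟨hbu.symm, .inl (.inr (.inl ⟨rfl, hvb, hub, hbu⟩))⟩

theorem adj_right_of_adj_both {b : V} (hvb : G.Adj v b) (hub : G.Adj u b) :
    (switchGraph G u v).Adj v b :=
  ⟨hvb.ne, .inl (.inl ⟨hvb, fun h => h.2.2.1 hub, fun h => hvb.ne' h.1⟩)⟩

theorem reachable_of_adj_right {s : Set V} {b : V} (hu : u ∈ s) (hv : v ∈ s) (hb : b ∈ s)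
    (huv : G.Adj u v) (hvb : G.Adj v b) :
    ((switchGraph G u v).induce s).Reachable ⟨v, hv⟩ ⟨b, hb⟩ := by
  have hvu : ((switchGraph G u v).induce s).Adj ⟨v, hv⟩ ⟨u, hu⟩ := (adj_self huv).symm
  by_cases hbu : b = u
  · subst hbu
    exact hvu.reachable
  · have hub : ((switchGraph G u v).induce s).Adj ⟨u, hu⟩ ⟨b, hb⟩ :=
      adj_left_of_adj_right hvb hbu
    exact hvu.reachable.trans hub.reachable

theorem induce_ne_connected {x : V} (hxu : x ≠ u) (huv : G.Adj u v)
    (hG : (G.induce {w | w ≠ x}).Connected) :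
    ((switchGraph G u v).induce {w | w ≠ x}).Connected := by
  refine hG.of_adj_reachable fun a b hab => ?_
  have hu : u ∈ {w | w ≠ x} := hxu.symm
  by_cases hav : a.1 = v
  · obtain ⟨a, ha⟩ := a
    subst hav
    exact reachable_of_adj_right hu ha b.2 huv hab
  by_cases hbv : b.1 = v
  · obtain ⟨b, hb⟩ := b
    subst hbv
    exact (reachable_of_adj_right hu hb a.2 huv hab.symm).symm
  exact Adj.reachable (adj_of_ne hav hbv hab)

theorem induce_ne_left_connected {w : V} (huv : u ≠ v) (huw : G.Adj u w) (hvw : G.Adj v w)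
    (hG : (G.induce {a | a ≠ u ∧ a ≠ v}).Connected) :
    ((switchGraph G u v).induce {a | a ≠ u}).Connected := by
  let φ : G.induce {a | a ≠ u ∧ a ≠ v} →g (switchGraph G u v).induce {a | a ≠ u} :=
    ⟨fun a => ⟨a.1, a.2.1⟩, fun {a b} hab => adj_of_ne a.2.2 b.2.2 hab⟩
  have hv : v ∈ {a | a ≠ u} := huv.symm
  have hwv : ((switchGraph G u v).induce {a | a ≠ u}).Adj ⟨w, huw.ne'⟩ ⟨v, hv⟩ :=
    (adj_right_of_adj_both hvw huw).symm
  have reach_v : ∀ a, ((switchGraph G u v).induce {a | a ≠ u}).Reachable a ⟨v, hv⟩ := by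
    rintro ⟨a, hau⟩
    by_cases hav : a = v
    · subst hav
      rfl
    · exact ((hG.preconnected ⟨a, hau, hav⟩ ⟨w, huw.ne', hvw.ne'⟩).map φ).trans hwv.reachable
  have : Nonempty {a | a ≠ u} := ⟨⟨v, hv⟩⟩
  exact ⟨fun a b => (reach_v a).trans (reach_v b).symm⟩

end switchGraph

theorem stmt_7 {V : Type*} (G : SimpleGraph V) (u v : V)
    (h2c : TwoConnected G) (huv : G.Adj u v)
    (hcn : ∃ w : V, G.Adj u w ∧ G.Adj v w)
    (hnot : ¬ TwoConnected (switchGraph G u v)) :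
    IsCutPair G u v := by
  by_contra hcut
  obtain ⟨w, huw, hvw⟩ := hcn
  refine hnot ⟨h2c.1, fun x => ?_⟩
  rcases eq_or_ne x u with rfl | hxu
  · exact switchGraph.induce_ne_left_connected huv.ne huw hvw (not_not.1 hcut)
  · exact switchGraph.induce_ne_connected hxu huv (h2c.2 x)
end

section
/- Let G be a connected graph, uv an edge of G, and ux any edge incident to u. If every cycle of G containing the edge ux has length at most k, then every cycle of the edge-switching graph G[v→u] containing the edge ux has length at most k. -/
/-! Rotate and orient a cycle of `G[v → u]` through `ux` so that it reads `u x … y u`. The path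
`x … y` avoids `u`, hence uses only edges of `G`. If `yu` is an edge of `G`, the cycle lies in `G`.
Otherwise `yu` replaced the edge `vy`. If `v` is not on the path, `u x … y v u` is a longer cycle of
`G`. If it is, say `x … v b … y`, then the edge `vb` survived the switch, so `b ∈ N(u)`, and the
Pósa rotation `x … v y … b` closed by `bu` is a cycle of `G` of the same length. -/

open SimpleGraph Walk

namespace SimpleGraph.Walk

variable {V : Type*} {G : SimpleGraph V} {u x : V}

lemma IsCycle.snd_eq_or_penultimate_eq {c : G.Walk u u} (hc : c.IsCycle)
    (he : s(u, x) ∈ c.edges) : c.snd = x ∨ c.penultimate = x := by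
  have htail : ¬ c.tail.Nil := by
    rw [← length_eq_zero_iff, length_tail]; have := hc.three_le_length; omega
  have hpen : (cons (c.adj_snd hc.not_nil) c.tail).penultimate = c.tail.penultimate :=
    penultimate_cons_of_not_nil _ _ htail
  rw [cons_tail_eq _ hc.not_nil] at hpen
  rw [← c.cons_tail_eq hc.not_nil, edges_cons, List.mem_cons] at he
  rcases he with he | he
  · exact .inl (Sym2.congr_right.mp he).symm
  · exact .inr (hpen.trans (hc.isPath_tail.eq_penultimate_of_mem_edges he).symm)

lemma IsCycle.exists_isPath_of_snd_eq {c : G.Walk u u} (hc : c.IsCycle) (hx : c.snd = x) :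
    ∃ p : G.Walk x u, p.IsPath ∧ c.length = p.length + 1 := by
  subst hx
  exact ⟨c.tail, hc.isPath_tail, (length_tail_add_one hc.not_nil).symm⟩

lemma IsCycle.exists_isPath_of_mem_edges {a : V} {c : G.Walk a a} (hc : c.IsCycle)
    (he : s(u, x) ∈ c.edges) : ∃ p : G.Walk x u, p.IsPath ∧ c.length = p.length + 1 := by
  classical
  have hu : u ∈ c.support := c.fst_mem_support_of_mem_edges he
  have hrot : (c.rotate u hu).IsCycle := hc.rotate hu
  rw [← length_rotate c u hu]
  rcases hrot.snd_eq_or_penultimate_eq ((c.rotate_edges u hu).mem_iff.mpr he) with hx | hx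
  · exact hrot.exists_isPath_of_snd_eq hx
  · rw [← length_reverse]
    exact hrot.reverse.exists_isPath_of_snd_eq (by rwa [snd_reverse])

lemma IsPath.cons_isCycle_of_two_le_length {p : G.Walk x u} (hp : p.IsPath) (h : G.Adj u x)
    (hlen : 2 ≤ p.length) : (cons h p).IsCycle :=
  isCycle_iff_isPath_tail_and_le_length.mpr ⟨by simpa using hp, by simp; omega⟩

lemma IsPath.exists_rotation {v y : V} {q : G.Walk x y} (hq : q.IsPath) (hv : v ∈ q.support)
    (hvy : G.Adj v y) : ∃ (b : V) (w : G.Walk x b), w.IsPath ∧ w.length = q.length ∧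
      w.support.Perm q.support ∧ s(v, b) ∈ q.edges := by
  obtain ⟨t, d, rfl⟩ := Walk.mem_support_iff_exists_append.mp hv
  have hd : ¬ d.Nil := not_nil_of_ne hvy.ne
  rw [← d.cons_tail_eq hd] at hq ⊢
  have hperm : (t.append (cons hvy d.tail.reverse)).support.Perm
      (t.append (cons (d.adj_snd hd) d.tail)).support := by
    simp only [support_append, support_cons, List.tail_cons, support_reverse]
    exact (List.reverse_perm _).append_left _
  refine ⟨d.snd, t.append (cons hvy d.tail.reverse), ?_, by simp, hperm, by simp⟩
  rw [isPath_def] at hq ⊢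
  exact hperm.nodup_iff.mpr hq

end SimpleGraph.Walk

section switchGraph

variable {V : Type*} {G : SimpleGraph V} {u v : V}

lemma adj_of_switchGraph_adj {a b : V} (ha : a ≠ u) (hb : b ≠ u)
    (h : (switchGraph G u v).Adj a b) : G.Adj a b := by
  rw [switchGraph, fromRel_adj] at h
  have := G.adj_symm (u := b) (v := a)
  tauto

lemma adj_or_adj_of_switchGraph_adj_left {b : V} (h : (switchGraph G u v).Adj u b) :
    G.Adj u b ∨ G.Adj v b := by
  rw [switchGraph, fromRel_adj] at h
  have := G.adj_symm (u := b) (v := u)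
  tauto

lemma adj_of_switchGraph_adj_right {b : V} (huv : u ≠ v) (hb : b ≠ u)
    (h : (switchGraph G u v).Adj v b) : G.Adj u b := by
  rw [switchGraph, fromRel_adj] at h
  have := G.adj_symm (u := b) (v := v)
  have : ¬ G.Adj v v := G.irrefl
  tauto

lemma mem_edgeSet_of_mem_edges_switchGraph {a b : V} {p : (switchGraph G u v).Walk a b}
    (hu : u ∉ p.support) {e : Sym2 V} (he : e ∈ p.edges) : e ∈ G.edgeSet := by
  induction e using Sym2.ind with
  | _ c d =>
    refine adj_of_switchGraph_adj ?_ ?_ (p.adj_of_mem_edges he)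
    · rintro rfl; exact hu (p.fst_mem_support_of_mem_edges he)
    · rintro rfl; exact hu (p.snd_mem_support_of_mem_edges he)

lemma exists_isPath_of_switchGraph_concat (huv : G.Adj u v) {x y : V}
    {q : (switchGraph G u v).Walk x y} (h : (switchGraph G u v).Adj y u)
    (hq : (q.concat h).IsPath) : ∃ w : G.Walk x u, w.IsPath ∧ q.length + 1 ≤ w.length := by
  classical
  obtain ⟨hqp, huq⟩ := (concat_isPath_iff h).mp hq
  set qG := q.transfer G fun _ ↦ mem_edgeSet_of_mem_edges_switchGraph huq
  have hqG : qG.IsPath := hqp.transfer _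
  have huqG : u ∉ qG.support := by rwa [support_transfer]
  rcases adj_or_adj_of_switchGraph_adj_left h.symm with hyu | hvy
  · exact ⟨qG.concat hyu.symm, hqG.concat huqG _, by simp [qG]⟩
  by_cases hv : v ∈ qG.support
  · obtain ⟨b, w, hw, hlen, hperm, hvb⟩ := hqG.exists_rotation hv hvy
    have huw : u ∉ w.support := fun hu ↦ huqG (hperm.subset hu)
    have hub : G.Adj u b := by
      rw [edges_transfer] at hvb
      refine adj_of_switchGraph_adj_right huv.ne ?_ (q.adj_of_mem_edges hvb)
      rintro rfl; exact huw w.end_mem_support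
    exact ⟨w.concat hub.symm, hw.concat huw _, by simp [hlen, qG]⟩
  · have huvq : u ∉ (qG.concat hvy.symm).support := by
      simp [huqG, huv.ne]
    exact ⟨(qG.concat hvy.symm).concat huv.symm, (hqG.concat hv _).concat huvq _, by simp [qG]⟩

lemma exists_isPath_of_switchGraph (huv : G.Adj u v) {x : V}
    {p : (switchGraph G u v).Walk x u} (hp : p.IsPath) :
    ∃ w : G.Walk x u, w.IsPath ∧ p.length ≤ w.length := by
  by_cases hnil : p.Nil
  · obtain rfl := hnil.eq
    exact ⟨nil, by simp, by simp [hnil.length_eq_zero]⟩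
  · obtain ⟨w, hw, hlen⟩ := exists_isPath_of_switchGraph_concat huv (p.adj_penultimate hnil)
      (by rwa [concat_dropLast])
    exact ⟨w, hw, length_dropLast_add_one hnil ▸ hlen⟩

end switchGraph

theorem stmt_8_general {V : Type*} (G : SimpleGraph V) (u v x : V) (k : ℕ)
    (huv : G.Adj u v) (hux : G.Adj u x)
    (hG : ∀ (a : V) (w : G.Walk a a), w.IsCycle → s(u, x) ∈ w.edges → w.length ≤ k) :
    ∀ (a : V) (w : (switchGraph G u v).Walk a a),
      w.IsCycle → s(u, x) ∈ w.edges → w.length ≤ k := by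
  intro a c hc he
  obtain ⟨p, hp, hcp⟩ := hc.exists_isPath_of_mem_edges he
  obtain ⟨w, hw, hpw⟩ := exists_isPath_of_switchGraph huv hp
  have h3 := hc.three_le_length
  have hlen := hG u (cons hux w) (hw.cons_isCycle_of_two_le_length hux (by omega)) (by simp)
  rw [length_cons] at hlen
  omega

theorem stmt_8 {V : Type*} (G : SimpleGraph V) (u v x : V) (k : ℕ)
    (hconn : G.Connected) (huv : G.Adj u v) (hux : G.Adj u x)
    (hG : ∀ (a : V) (w : G.Walk a a), w.IsCycle → s(u, x) ∈ w.edges → w.length ≤ k) :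
    ∀ (a : V) (w : (switchGraph G u v).Walk a a),
      w.IsCycle → s(u, x) ∈ w.edges → w.length ≤ k :=
  stmt_8_general G u v x k huv hux hG
end

section
/- Let G be a graph and uv an edge of G. Then for every integer s ≥ 2, the number of s-cliques of the edge-switching graph G[v→u] is at least the number of s-cliques of G, i.e., N_s(G[v→u]) ≥ N_s(G). -/
theorem Finset.eq_of_insert_erase_eq {α : Type*} [DecidableEq α] {s t : Finset α} {a b : α}
    (hs : b ∈ s) (ht : b ∈ t) (has : a ∉ s) (hat : a ∉ t)
    (h : insert a (s.erase b) = insert a (t.erase b)) : s = t := by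
  have h' : s.erase b = t.erase b := by
    simpa [erase_insert fun ha => has (mem_of_mem_erase ha),
      erase_insert fun ha => hat (mem_of_mem_erase ha)] using congrArg (·.erase a) h
  exact erase_injOn' b hs ht h'

section switchGraph

variable {V : Type*} {G : SimpleGraph V} {u v a b : V}

theorem switchGraph_adj_of_adj_of_ne (h : G.Adj a b) (ha : a ≠ v) (hb : b ≠ v) :
    (switchGraph G u v).Adj a b :=
  (SimpleGraph.fromRel_adj _ _ _).2
    ⟨h.ne, .inl (.inl ⟨h, fun h' => ha h'.1, fun h' => hb h'.1⟩)⟩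

theorem switchGraph_adj_of_adj_target (h : G.Adj u b) : (switchGraph G u v).Adj u b :=
  (SimpleGraph.fromRel_adj _ _ _).2
    ⟨h.ne, .inl (.inl ⟨h, fun h' => h'.2.2.1 h, fun h' => h'.2.2.2 rfl⟩)⟩

theorem switchGraph_adj_of_adj_source (h : G.Adj v b) (hb : b ≠ u) :
    (switchGraph G u v).Adj u b := by
  by_cases hub : G.Adj u b
  · exact switchGraph_adj_of_adj_target hub
  · exact (SimpleGraph.fromRel_adj _ _ _).2
      ⟨hb.symm, .inl (.inr (.inl ⟨rfl, h, hub, hb⟩))⟩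

theorem eq_of_adj_of_not_switchGraph_adj (h : G.Adj a b) (h' : ¬ (switchGraph G u v).Adj a b) :
    (a = v ∧ b ≠ u ∧ ¬ G.Adj u b) ∨ (b = v ∧ a ≠ u ∧ ¬ G.Adj u a) := by
  by_contra hcon
  simp only [not_or, not_and, not_not] at hcon
  exact h' ((SimpleGraph.fromRel_adj _ _ _).2 ⟨h.ne, .inl (.inl ⟨h,
    fun ⟨ha, _, hub, hbu⟩ => hub (hcon.1 ha hbu),
    fun ⟨hb, _, hua, hau⟩ => hua (hcon.2 hb hau)⟩)⟩)

theorem exists_of_isClique_of_not_isClique_switchGraph {s : Set V} (hs : G.IsClique s)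
    (hs' : ¬ (switchGraph G u v).IsClique s) :
    v ∈ s ∧ u ∉ s ∧ ∃ x ∈ s, x ≠ v ∧ ¬ G.Adj u x := by
  obtain ⟨a, ha, b, hb, hab, hnadj⟩ :
      ∃ a ∈ s, ∃ b ∈ s, a ≠ b ∧ ¬ (switchGraph G u v).Adj a b := by
    simpa [SimpleGraph.IsClique, Set.Pairwise] using hs'
  rcases eq_of_adj_of_not_switchGraph_adj (hs ha hb hab) hnadj with
    ⟨rfl, hbu, hub⟩ | ⟨rfl, hau, hua⟩
  · exact ⟨ha, fun hu => hub (hs hu hb hbu.symm), b, hb, hab.symm, hub⟩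
  · exact ⟨hb, fun hu => hua (hs hu ha hau.symm), a, ha, hab, hua⟩

theorem isClique_switchGraph_of_notMem {s : Set V} (hs : G.IsClique s) (hv : v ∉ s) :
    (switchGraph G u v).IsClique s := fun _ ha _ hb hab =>
  switchGraph_adj_of_adj_of_ne (hs ha hb hab) (ne_of_mem_of_not_mem ha hv)
    (ne_of_mem_of_not_mem hb hv)

variable [DecidableEq V] {n : ℕ} {S : Finset V}

theorem SimpleGraph.IsNClique.insert_erase_switchGraph (hS : G.IsNClique n S) (hv : v ∈ S)
    (hu : u ∉ S) : (switchGraph G u v).IsNClique n (insert u (S.erase v)) := by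
  have hn : n - 1 + 1 = n := Nat.sub_add_cancel (hS.card_eq ▸ Finset.card_pos.2 ⟨v, hv⟩)
  have hS' := hS.erase_of_mem hv
  rw [← hn]
  refine SimpleGraph.IsNClique.insert ⟨isClique_switchGraph_of_notMem hS'.1 (by simp), hS'.2⟩
    fun b hb => switchGraph_adj_of_adj_source ?_
      (ne_of_mem_of_not_mem (Finset.mem_of_mem_erase hb) hu)
  exact hS.1 hv (Finset.mem_of_mem_erase hb) (Finset.ne_of_mem_erase hb).symm

theorem not_isClique_insert_erase (hS : G.IsClique (S : Set V))
    (hS' : ¬ (switchGraph G u v).IsClique (S : Set V)) :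
    ¬ G.IsClique (insert u (S.erase v) : Finset V) := by
  obtain ⟨-, hu, x, hx, hxv, hux⟩ := exists_of_isClique_of_not_isClique_switchGraph hS hS'
  intro h
  have hx' : x ∈ insert u (S.erase v) :=
    Finset.mem_insert_of_mem (Finset.mem_erase.2 ⟨hxv, hx⟩)
  exact hux (h (Finset.mem_insert_self u _) hx' (ne_of_mem_of_not_mem hx hu).symm)

end switchGraph

open Classical in
noncomputable def cliqueShift {V : Type*} (G : SimpleGraph V) (u v : V) (n : ℕ) (S : Finset V) :
    Finset V :=
  if (switchGraph G u v).IsNClique n S then S else insert u (S.erase v)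

section cliqueShift

variable {V : Type*} {G : SimpleGraph V} {u v : V} {n : ℕ}

theorem isNClique_switchGraph_cliqueShift {S : Finset V} (hS : G.IsNClique n S) :
    (switchGraph G u v).IsNClique n (cliqueShift G u v n S) := by
  classical
  unfold cliqueShift
  split_ifs with h
  · exact h
  · obtain ⟨hv, hu, -⟩ :=
      exists_of_isClique_of_not_isClique_switchGraph hS.1 fun h' => h ⟨h', hS.2⟩
    exact hS.insert_erase_switchGraph hv hu

theorem injOn_cliqueShift : Set.InjOn (cliqueShift G u v n) (G.cliqueSet n) := by
  classical
  intro S hS T hT hST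
  unfold cliqueShift at hST
  split_ifs at hST with hS' hT' hT'
  · exact hST
  · exact absurd (hST ▸ hS.1) (not_isClique_insert_erase hT.1 fun h => hT' ⟨h, hT.2⟩)
  · exact absurd (hST ▸ hT.1) (not_isClique_insert_erase hS.1 fun h => hS' ⟨h, hS.2⟩)
  · obtain ⟨hvS, huS, -⟩ :=
      exists_of_isClique_of_not_isClique_switchGraph hS.1 fun h => hS' ⟨h, hS.2⟩
    obtain ⟨hvT, huT, -⟩ :=
      exists_of_isClique_of_not_isClique_switchGraph hT.1 fun h => hT' ⟨h, hT.2⟩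
    exact Finset.eq_of_insert_erase_eq hvS hvT huS huT hST

end cliqueShift

theorem stmt_10_general {V : Type*} [Fintype V] (G : SimpleGraph V) (u v : V) (s : ℕ) :
    (G.cliqueSet s).ncard ≤ ((switchGraph G u v).cliqueSet s).ncard :=
  Set.ncard_le_ncard_of_injOn _ (fun _ hS => isNClique_switchGraph_cliqueShift hS)
    injOn_cliqueShift

theorem stmt_10 {V : Type*} [Fintype V] (G : SimpleGraph V) (u v : V) (s : ℕ)
    (huv : G.Adj u v) (hs : 2 ≤ s) :
    (G.cliqueSet s).ncard ≤ ((switchGraph G u v).cliqueSet s).ncard :=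
  stmt_10_general G u v s
end

section
/- Let G be a connected graph on n ≥ 2 vertices having no cycle of length 4 or more. Then the number of triangles of G is at most (n-1)/2, i.e., N_3(G) ≤ ⌊(n-1)/2⌋. -/
/-!
If every cycle has length at most 3, distinct triangles share no edge: two triangles on an edge
`ab` with apexes `c ≠ d` would close the 4-cycle `a c b d`. Order the vertices linearly and delete,
from every triangle, the edge opposite its least vertex. A cycle of the remaining graph would be a
triangle of `G` that lost none of its edges, so what remains is a forest, with at most `n - 1`
edges. By edge-disjointness it still contains the two edges at the least vertex of each triangle,
so `2 N₃(G) ≤ n - 1`.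
-/

open Finset

namespace SimpleGraph

variable {V : Type*} {G H : SimpleGraph V}

lemma IsAcyclic.card_edgeFinset_le [Fintype V] [Fintype G.edgeSet] (hG : G.IsAcyclic) :
    #G.edgeFinset ≤ Fintype.card V - 1 := by
  cases isEmpty_or_nonempty V
  · simp [Subsingleton.elim G ⊥]
  · obtain ⟨T, hGT, -, hT⟩ := connected_top.exists_isTree_le_of_le_of_isAcyclic le_top hG
    classical
    have hT_card := hT.card_edgeFinset
    have hGT_card := card_le_card (edgeFinset_mono hGT)
    omega

lemma subsingleton_commonNeighbors_of_adj
    (hcyc : ∀ (a : V) (w : G.Walk a a), w.IsCycle → w.length < 4) {a b : V} (hab : G.Adj a b) :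
    (G.commonNeighbors a b).Subsingleton := by
  rintro c ⟨hac : G.Adj a c, hbc : G.Adj b c⟩ d ⟨had : G.Adj a d, hbd : G.Adj b d⟩
  by_contra hcd
  have hlen := hcyc a (.cons hac (.cons hbc.symm (.cons hbd (.cons had.symm .nil)))) (by
    simp [Walk.cons_isCycle_iff, hab.ne, hab.ne', hac.ne, hac.ne', had.ne, had.ne', hbc.ne',
      hbd.ne, hcd])
  simp at hlen

lemma edgeDisjointTriangles_of_forall_isCycle_length_lt_four
    (hcyc : ∀ (a : V) (w : G.Walk a a), w.IsCycle → w.length < 4) : G.EdgeDisjointTriangles := by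
  have exists_mem_notMem {T T' : Finset V} (hT : G.IsNClique 3 T) (hT' : G.IsNClique 3 T')
      (hne : T ≠ T') : ∃ z ∈ T, z ∉ T' :=
    not_subset.mp fun h ↦ hne (eq_of_subset_of_card_le h (by rw [hT.card_eq, hT'.card_eq]))
  intro T hT T' hT' hne x ⟨hxT, hxT'⟩ y ⟨hyT, hyT'⟩
  by_contra hxy
  obtain ⟨z, hz, hz'⟩ := exists_mem_notMem hT hT' hne
  obtain ⟨w, hw', hw⟩ := exists_mem_notMem hT' hT hne.symm
  have hzw : z = w := subsingleton_commonNeighbors_of_adj hcyc (hT.1 hxT hyT hxy)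
    ⟨hT.1 hxT hz (ne_of_mem_of_not_mem hxT' hz'), hT.1 hyT hz (ne_of_mem_of_not_mem hyT' hz')⟩
    ⟨hT'.1 hxT' hw' (ne_of_mem_of_not_mem hxT hw), hT'.1 hyT' hw' (ne_of_mem_of_not_mem hyT hw)⟩
  exact hz' (hzw ▸ hw')

lemma isAcyclic_of_le_of_cliqueFree_three
    (hcyc : ∀ (a : V) (w : G.Walk a a), w.IsCycle → w.length < 4) (hHG : H ≤ G)
    (hH : H.CliqueFree 3) : H.IsAcyclic := by
  intro v c hc
  have hlen : c.length = 3 :=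
    le_antisymm (Nat.le_of_lt_succ (by simpa using hcyc v (c.mapLe hHG) (hc.mapLe hHG)))
      hc.three_le_length
  obtain ⟨T, hT⟩ := is3Clique_iff_exists_cycle_length_three.mpr ⟨v, c, hc, hlen⟩
  exact hH T hT

section LinearOrder

variable [LinearOrder V]

lemma exists_lt_of_isNClique_three {T : Finset V} (hT : G.IsNClique 3 T) :
    ∃ a b c, G.Adj a b ∧ G.Adj a c ∧ G.Adj b c ∧ a < b ∧ a < c ∧ T = {a, b, c} := by
  have hne : T.Nonempty := card_pos.mp (by rw [hT.card_eq]; norm_num)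
  set a := T.min' hne
  have hcard : #(T.erase a) = 2 := by rw [card_erase_of_mem (min'_mem T hne), hT.card_eq]
  obtain ⟨b, c, hbc, hTa⟩ := card_eq_two.mp hcard
  have hb : b ∈ T.erase a := by simp [hTa]
  have hc : c ∈ T.erase a := by simp [hTa]
  refine ⟨a, b, c, hT.1 (min'_mem T hne) (mem_of_mem_erase hb) (ne_of_mem_erase hb).symm,
    hT.1 (min'_mem T hne) (mem_of_mem_erase hc) (ne_of_mem_erase hc).symm,
    hT.1 (mem_of_mem_erase hb) (mem_of_mem_erase hc) hbc,
    min'_lt_of_mem_erase_min' T hne hb, min'_lt_of_mem_erase_min' T hne hc, ?_⟩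
  rw [← hTa, insert_erase (min'_mem T hne)]

def deleteTopEdges (G : SimpleGraph V) : SimpleGraph V where
  Adj u v := G.Adj u v ∧ ¬∃ a, a < u ∧ a < v ∧ G.Adj a u ∧ G.Adj a v
  symm := ⟨fun _ _ ⟨h, h'⟩ ↦ ⟨h.symm, fun ⟨a, hu, hv, hau, hav⟩ ↦ h' ⟨a, hv, hu, hav, hau⟩⟩⟩

lemma deleteTopEdges_adj {u v : V} :
    G.deleteTopEdges.Adj u v ↔ G.Adj u v ∧ ¬∃ a, a < u ∧ a < v ∧ G.Adj a u ∧ G.Adj a v :=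
  Iff.rfl

lemma deleteTopEdges_le (G : SimpleGraph V) : G.deleteTopEdges ≤ G := fun _ _ h ↦ h.1

lemma cliqueFree_three_deleteTopEdges (G : SimpleGraph V) : G.deleteTopEdges.CliqueFree 3 :=
  fun _ hT ↦
    have ⟨a, _, _, hab, hac, hbc, hb, hc, _⟩ := exists_lt_of_isNClique_three hT
    (deleteTopEdges_adj.mp hbc).2
      ⟨a, hb, hc, (deleteTopEdges_adj.mp hab).1, (deleteTopEdges_adj.mp hac).1⟩

lemma deleteTopEdges_adj_of_lt (hcyc : ∀ (a : V) (w : G.Walk a a), w.IsCycle → w.length < 4)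
    {a b c : V} (hab : G.Adj a b) (hac : G.Adj a c) (hbc : G.Adj b c) (hc : a < c) :
    G.deleteTopEdges.Adj a b :=
  deleteTopEdges_adj.mpr ⟨hab, fun ⟨_, hda, _, hd, hd'⟩ ↦
    (subsingleton_commonNeighbors_of_adj hcyc hab ⟨hac, hbc⟩ ⟨hd.symm, hd'.symm⟩ ▸ hc).not_gt hda⟩

lemma two_mul_card_cliqueFinset_le_card_edgeFinset_deleteTopEdges [Fintype V]
    [DecidableRel G.Adj] [Fintype G.deleteTopEdges.edgeSet]
    (hcyc : ∀ (a : V) (w : G.Walk a a), w.IsCycle → w.length < 4) :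
    2 * #(G.cliqueFinset 3) ≤ #G.deleteTopEdges.edgeFinset := by
  calc 2 * #(G.cliqueFinset 3) = #(G.cliqueFinset 3) * 2 := mul_comm _ _
    _ ≤ #G.deleteTopEdges.edgeFinset * 1 := card_mul_le_card_mul (fun T e ↦ e ∈ T.sym2) ?_ ?_
    _ = #G.deleteTopEdges.edgeFinset := mul_one _
  · intro T hT
    obtain ⟨a, b, c, hab, hac, hbc, hb, hc, rfl⟩ :=
      exists_lt_of_isNClique_three (mem_cliqueFinset_iff.mp hT)
    calc 2 = #{s(a, b), s(a, c)} := (card_pair (by simp [hbc.ne, hac.ne])).symm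
      _ ≤ _ := card_le_card (by
        simp [insert_subset_iff, deleteTopEdges_adj_of_lt hcyc hab hac hbc hc,
          deleteTopEdges_adj_of_lt hcyc hac hab hbc.symm hb])
  · intro e he
    simpa only [card_le_one, mem_bipartiteBelow, and_imp, Set.Subsingleton, Set.mem_ofPred_eq,
      mem_cliqueFinset_iff, mem_cliqueSet_iff]
      using (edgeDisjointTriangles_of_forall_isCycle_length_lt_four hcyc).mem_sym2_subsingleton
        (G.deleteTopEdges.not_isDiag_of_mem_edgeSet (mem_edgeFinset.mp he))

end LinearOrder

end SimpleGraph

theorem stmt_11_general {V : Type*} [Fintype V] (G : SimpleGraph V) (n : ℕ)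
    (hn : Fintype.card V = n)
    (hcyc : ∀ (a : V) (w : G.Walk a a), w.IsCycle → w.length < 4) :
    (G.cliqueSet 3).ncard ≤ (n - 1) / 2 := by
  let _ : LinearOrder V := LinearOrder.lift' _ (Fintype.equivFin V).injective
  classical
  have hcount := G.two_mul_card_cliqueFinset_le_card_edgeFinset_deleteTopEdges hcyc
  have hforest := (G.isAcyclic_of_le_of_cliqueFree_three hcyc G.deleteTopEdges_le
    G.cliqueFree_three_deleteTopEdges).card_edgeFinset_le
  rw [← SimpleGraph.coe_cliqueFinset, Set.ncard_coe_finset]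
  omega

theorem stmt_11 {V : Type*} [Fintype V] (G : SimpleGraph V) (n : ℕ)
    (hn : Fintype.card V = n) (hn2 : 2 ≤ n) (hconn : G.Connected)
    (hcyc : ∀ (a : V) (w : G.Walk a a), w.IsCycle → w.length < 4) :
    (G.cliqueSet 3).ncard ≤ (n - 1) / 2 :=
  stmt_11_general G n hn hcyc
end

section
/- Let G be a 2-connected graph in which a vertex u is adjacent to all other vertices, and let uv be an edge such that no cycle of G through uv has length at least k, where k ≥ 4. Then G - u has no cycle of length at least k-1. -/
namespace SimpleGraph.Walk

variable {V : Type*} {G : SimpleGraph V} {u v w a : V}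

theorem exists_isPath_to_set_meeting_only_at_end {S : Set V} (q : G.Walk v a) (ha : a ∈ S) :
    ∃ x ∈ S, ∃ P : G.Walk v x, P.IsPath ∧ ∀ y ∈ P.support, y ∈ S → y = x := by
  classical
  induction q with
  | nil => exact ⟨_, ha, nil, .nil, by simp⟩
  | @cons b c d h q ih =>
    by_cases hb : b ∈ S
    · exact ⟨b, hb, nil, .nil, by simp⟩
    obtain ⟨x, hx, P, -, hP⟩ := ih ha
    refine ⟨x, hx, (cons h P).bypass, bypass_isPath _, fun y hy hyS => ?_⟩
    obtain rfl | hy := List.mem_cons.mp (support_bypass_subset_support _ hy)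
    · exact absurd hyS hb
    · exact hP y hy hyS

theorem IsPath.append_of_forall_mem_support {p : G.Walk u v} {q : G.Walk v w}
    (hp : p.IsPath) (hq : q.IsPath) (h : ∀ x ∈ p.support, x ∈ q.support → x = v) :
    (p.append q).IsPath := by
  have hv : v ∉ q.support.tail := by
    have := hq.support_nodup
    rw [← cons_tail_support] at this
    exact (List.nodup_cons.mp this).1
  rw [isPath_def, support_append, List.nodup_append]
  refine ⟨hp.support_nodup, hq.support_nodup.sublist (List.tail_sublist _), ?_⟩
  rintro x hxp y hyq rfl
  exact hv (h x hxp (List.mem_of_mem_tail hyq) ▸ hyq)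

theorem IsCycle.exists_isPath_of_mem_support {C : G.Walk a a} (hC : C.IsCycle)
    (hu : u ∈ C.support) :
    ∃ z, ∃ p : G.Walk u z, p.IsPath ∧ p.length + 1 = C.length ∧ ∀ y ∈ p.support, y ∈ C.support := by
  classical
  have hC' := hC.rotate hu
  refine ⟨_, (C.rotate u hu).dropLast, hC'.isPath_dropLast, ?_, fun y hy => ?_⟩
  · rw [length_dropLast_add_one hC'.not_nil, length_rotate]
  · rw [← mem_support_rotate_iff C u hu, ← support_dropLast_concat hC'.not_nil]
    exact List.mem_append_left _ hy

theorem IsCycle.exists_isPath_length_ge_of_reachable {C : G.Walk a a} (hC : C.IsCycle)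
    (h : G.Reachable v a) : ∃ z, ∃ p : G.Walk v z, p.IsPath ∧ C.length ≤ p.length + 1 := by
  obtain ⟨q⟩ := h
  obtain ⟨x, hx, P, hP, hPC⟩ := q.exists_isPath_to_set_meeting_only_at_end
    (S := {y | y ∈ C.support}) C.start_mem_support
  obtain ⟨z, p, hp, hlen, hpC⟩ := hC.exists_isPath_of_mem_support hx
  refine ⟨z, P.append p,
    hP.append_of_forall_mem_support hp fun y hy hyp => hPC y hy (hpC y hyp), ?_⟩
  rw [length_append]
  omega

theorem IsPath.isCycle_cons_concat {p : G.Walk v w} (hp : p.IsPath) (hu : u ∉ p.support)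
    (hn : ¬p.Nil) (huv : G.Adj u v) (hwu : G.Adj w u) :
    ((cons huv p).concat hwu).IsCycle := by
  rw [concat_eq_append]
  refine (hp.cons hu).isCycle_append (IsPath.nil.cons ?_) ?_ ?_
  · simpa using hwu.ne
  · simpa using hu
  · left; simpa [Nat.one_lt_succ_succ, ← not_nil_iff_lt_length] using hn

theorem IsPath.exists_isPath_of_induce {s : Set V} {a b : s} {p : (G.induce s).Walk a b}
    (hp : p.IsPath) :
    ∃ q : G.Walk a b, q.IsPath ∧ q.length = p.length ∧ ∀ y ∈ q.support, y ∈ s := by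
  refine ⟨p.map (Embedding.induce s).toHom, hp.map Subtype.val_injective, length_map _ _,
    fun y hy => ?_⟩
  obtain ⟨y', -, rfl⟩ := List.mem_map.mp (Walk.support_map (Embedding.induce s).toHom p ▸ hy)
  exact y'.2

end SimpleGraph.Walk

open SimpleGraph Walk

theorem stmt_17_general {V : Type*} (G : SimpleGraph V) (u v : V) (k : ℕ)
    (h2c : TwoConnected G)
    (hdom : ∀ w : V, w ≠ u → G.Adj u w) (huv : G.Adj u v)
    (hcyc : ∀ (a : V) (w : G.Walk a a), w.IsCycle → s(u, v) ∈ w.edges → w.length < k) :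
    ∀ (a : {w : V // w ∈ {w : V | w ≠ u}})
      (w : (G.induce {w : V | w ≠ u}).Walk a a), w.IsCycle → w.length < k - 1 := by
  intro a C hC
  obtain ⟨z, p, hp, hlen⟩ := hC.exists_isPath_length_ge_of_reachable (h2c.2 u ⟨v, huv.ne'⟩ a)
  obtain ⟨q, hq, hqlen, hqu⟩ := hp.exists_isPath_of_induce
  have hu : u ∉ q.support := fun h => hqu u h rfl
  have hn : ¬q.Nil := by
    rw [not_nil_iff_lt_length]
    have := hC.three_le_length
    omega
  have := hcyc u _ (hq.isCycle_cons_concat hu hn huv (hdom z z.2).symm)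
    (by rw [edges_concat, edges_cons]; simp)
  rw [length_concat, length_cons] at this
  omega

theorem stmt_17 {V : Type*} (G : SimpleGraph V) (u v : V) (k : ℕ)
    (hk : 4 ≤ k) (h2c : TwoConnected G)
    (hdom : ∀ w : V, w ≠ u → G.Adj u w) (huv : G.Adj u v)
    (hcyc : ∀ (a : V) (w : G.Walk a a), w.IsCycle → s(u, v) ∈ w.edges → w.length < k) :
    ∀ (a : {w : V // w ∈ {w : V | w ≠ u}})
      (w : (G.induce {w : V | w ≠ u}).Walk a a), w.IsCycle → w.length < k - 1 :=
  stmt_17_general G u v k h2c hdom huv hcyc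
end
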